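/- For the metric on the space of conics with contravariant components g^{ys}=24q², g^{pr}=-24q², g^{ps}=-72qr, g^{qq}=24q², g^{qr}=24qr, g^{qs}=48qs-32r², g^{rr}=56r²-24qs, g^{rs}=(160/3)r³/q-16rs, g^{ss}=104s²-320r²s/q+(2560/9)r⁴/q² (other entries zero), the coordinates (y,p,q,r,s) are harmonic: the Laplace–Beltrami operator applied to each coordinate function vanishes, equivalently ∂_a(√|g|·g^{ab}) = 0 for each b. -/

import Mathlib

noncomputable section

open Matrix

/-- Partial derivative along the `i`-th coordinate of `ℝ⁵`. -/
def pd (i : Fin 5) (f : (Fin 5 → ℝ) → ℝ) (v : Fin 5 → ℝ) : ℝ :=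
  fderiv ℝ f v (Pi.single i 1)

/-- Contravariant metric on the space of conics, as a matrix field on `ℝ⁵` with
coordinates `(y,p,q,r,s) = (v 0, v 1, v 2, v 3, v 4)`. -/
def gUp (v : Fin 5 → ℝ) : Matrix (Fin 5) (Fin 5) ℝ :=
  let q := v 2; let r := v 3; let s := v 4
  !![0, 0, 0, 0, 24 * q ^ 2;
     0, 0, 0, -24 * q ^ 2, -72 * q * r;
     0, 0, 24 * q ^ 2, 24 * q * r, 48 * q * s - 32 * r ^ 2;
     0, -24 * q ^ 2, 24 * q * r, 56 * r ^ 2 - 24 * q * s,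
       (160 / 3) * r ^ 3 / q - 16 * r * s;
     24 * q ^ 2, -72 * q * r, 48 * q * s - 32 * r ^ 2,
       (160 / 3) * r ^ 3 / q - 16 * r * s,
       104 * s ^ 2 - 320 * r ^ 2 * s / q + (2560 / 9) * r ^ 4 / q ^ 2]

/-!
Reversing the order of the columns makes `gUp` lower triangular with diagonal
`24q², -24q², 24q², -24q², 24q²`, so `det g^{ab} = (24q²)⁵` and `√|g| = 24^{-5/2}|q|^{-5}`.
Near a point with `q ≠ 0` the factor `|q|^{-5}` is `±q^{-5}`, so it suffices that the densitized
field `q^{-5} g^{ab}` is divergence free. Every entry depends only on `(q, r, s)`, and the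
divergence is a direct computation of one-variable derivatives.
-/

open Filter Topology

theorem det_gUp (v : Fin 5 → ℝ) : (gUp v).det = (24 * v 2 ^ 2) ^ 5 := by
  have hrev : ((gUp v).submatrix id Fin.revPerm).det = (gUp v).det := by
    rw [det_permute', show Equiv.Perm.sign (Fin.revPerm : Equiv.Perm (Fin 5)) = 1 by decide]
    simp
  have htri : ((gUp v).submatrix id Fin.revPerm).IsLowerTriangular := by
    intro i j hij
    rw [OrderDual.toDual_lt_toDual] at hij
    fin_cases i <;> fin_cases j <;> simp [gUp, Fin.rev] at hij ⊢
  rw [← hrev, det_of_isLowerTriangular _ htri, Fin.prod_univ_five]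
  simp [gUp, Fin.rev]
  ring

theorem sqrt_abs_det_inv_gUp (w : Fin 5 → ℝ) :
    √|((gUp w)⁻¹).det| = (√24 ^ 5)⁻¹ * |(w 2 ^ 5)⁻¹| := by
  have h24 : √24 ^ 2 = 24 := Real.sq_sqrt (by norm_num)
  have hsq : |(24 * w 2 ^ 2) ^ 5| = (√24 ^ 5 * |w 2 ^ 5|) ^ 2 := by
    rw [abs_of_nonneg (by positivity), mul_pow (√24 ^ 5), sq_abs, ← pow_mul, mul_comm 5 2, pow_mul,
      h24]
    ring
  rw [det_nonsing_inv, Ring.inverse_eq_inv', det_gUp, abs_inv, Real.sqrt_inv, hsq,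
    Real.sqrt_sq (by positivity), mul_inv, abs_inv]

theorem abs_eventuallyEq_sign_mul {x₀ : ℝ} (h : x₀ ≠ 0) :
    (fun x : ℝ => |x|) =ᶠ[𝓝 x₀] fun x => Real.sign x₀ * x := by
  rcases h.lt_or_gt with h | h
  · filter_upwards [gt_mem_nhds h] with x hx
    simp [Real.sign_of_neg h, abs_of_neg hx]
  · filter_upwards [lt_mem_nhds h] with x hx
    simp [Real.sign_of_pos h, abs_of_pos hx]

theorem pd_congr {f g : (Fin 5 → ℝ) → ℝ} {v : Fin 5 → ℝ} (h : f =ᶠ[𝓝 v] g) (i : Fin 5) :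
    pd i f v = pd i g v := by
  rw [pd, pd, h.fderiv_eq]

theorem pd_const_mul (c : ℝ) (f : (Fin 5 → ℝ) → ℝ) (i : Fin 5) (v : Fin 5 → ℝ) :
    pd i (fun w => c * f w) v = c * pd i f v := by
  change fderiv ℝ (c • f) v (Pi.single i 1) = c * fderiv ℝ f v (Pi.single i 1)
  rw [fderiv_const_smul_field]
  rfl

theorem pd_eq_deriv_update {f : (Fin 5 → ℝ) → ℝ} {v : Fin 5 → ℝ}
    (hf : DifferentiableAt ℝ f v) (i : Fin 5) :
    pd i f v = deriv (fun t => f (Function.update v i t)) (v i) := by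
  have hf' : HasFDerivAt f (fderiv ℝ f v) (Function.update v i (v i)) := by
    rw [Function.update_eq_self]
    exact hf.hasFDerivAt
  exact ((hf'.comp_hasDerivAt (v i) (hasDerivAt_update v i (v i))).deriv).symm

theorem differentiableAt_densitized_gUp {v : Fin 5 → ℝ} (hv : v 2 ≠ 0) (a b : Fin 5) :
    DifferentiableAt ℝ (fun w => (w 2 ^ 5)⁻¹ * gUp w a b) v := by
  fin_cases a <;> fin_cases b <;> simp [gUp] <;> fun_prop (disch := simp [hv])

theorem sum_pd_densitized_gUp_eq_zero {v : Fin 5 → ℝ} (hv : v 2 ≠ 0) (b : Fin 5) :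
    ∑ a, pd a (fun w => (w 2 ^ 5)⁻¹ * gUp w a b) v = 0 := by
  simp only [pd_eq_deriv_update (differentiableAt_densitized_gUp hv _ b)]
  fin_cases b <;>
    simp (disch := first | fun_prop (disch := simp [hv]) | simp [hv])
      [Fin.sum_univ_five, gUp, Function.update_apply] <;>
    field_simp <;>
    ring

/-- The coordinates `(y,p,q,r,s)` are harmonic for the conic metric:
`∂_a(√|g| · g^{ab}) = 0` for each `b`, where `|g|` is the determinant of the
covariant metric `(gUp)⁻¹`. -/
theorem conic_coordinates_are_harmonic :
    ∀ v : Fin 5 → ℝ, v 2 ≠ 0 → ∀ b : Fin 5,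
      ∑ a : Fin 5,
        pd a (fun w => Real.sqrt |((gUp w)⁻¹).det| * gUp w a b) v = 0 := by
  intro v hv b
  set c := (√24 ^ 5)⁻¹ * Real.sign (v 2 ^ 5)⁻¹
  have hlocal : ∀ a, (fun w => √|((gUp w)⁻¹).det| * gUp w a b)
      =ᶠ[𝓝 v] fun w => c * ((w 2 ^ 5)⁻¹ * gUp w a b) := by
    intro a
    have hcont : ContinuousAt (fun w : Fin 5 → ℝ => (w 2 ^ 5)⁻¹) v :=
      ((continuous_apply 2).continuousAt.pow 5).inv₀ (pow_ne_zero 5 hv)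
    filter_upwards [(abs_eventuallyEq_sign_mul (by simpa using hv)).comp_tendsto hcont]
      with w (hw : |(w 2 ^ 5)⁻¹| = Real.sign (v 2 ^ 5)⁻¹ * (w 2 ^ 5)⁻¹)
    rw [sqrt_abs_det_inv_gUp, hw]
    ring
  simp_rw [pd_congr (hlocal _), pd_const_mul, ← Finset.mul_sum, sum_pd_densitized_gUp_eq_zero hv,
    mul_zero]
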